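/- Let ω = e^{2πi/3}, let Z be the diagonal 3×3 unitary with Z e_r = ω^r e_r and X the cyclic shift with X e_r = e_{r+1 (mod 3)}, for t ∈ ℝ let ψ = ψ_f(t) = (0, 1, −e^{it})/√2 ∈ ℂ³, and for a unit vector φ write ρ_φ = |φ⟩⟨φ| for the orthogonal projection onto ℂφ. Then tr(ρ_ψ ρ_{Zψ} ρ_{Z²ψ}) = −1/8 and tr(ρ_ψ ρ_{Xψ} ρ_{X²ψ}) = −e^{−3it}/8. In particular the geometric phase |arg tr(ρ_ψ ρ_{Zψ} ρ_{Z²ψ})| equals π, and for t ∈ [0, π/3] the geometric phase |arg tr(ρ_ψ ρ_{Xψ} ρ_{X²ψ})| equals π − 3t. -/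

import Mathlib

noncomputable section

open Complex Matrix

/-- The standard Hermitian inner product on `ℂ^d`, conjugate-linear in the first argument. -/
def inn {d : ℕ} (x y : Fin d → ℂ) : ℂ := ∑ i, (starRingEnd ℂ) (x i) * y i

/-- A SIC POVM in dimension `d`: `d²` unit vectors with pairwise squared overlap `1/(d+1)`. -/
def IsSIC {d : ℕ} (ψ : Fin (d ^ 2) → (Fin d → ℂ)) : Prop :=
  (∀ j, inn (ψ j) (ψ j) = 1) ∧
    ∀ j k, j ≠ k → ‖inn (ψ j) (ψ k)‖ ^ 2 = 1 / (d + 1)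

/-- A single operator `U` leaves the SIC POVM `ψ` invariant: it permutes the vectors up to
modulus-one phase factors. -/
def LeavesInvariant {d : ℕ} (U : Matrix (Fin d) (Fin d) ℂ)
    (ψ : Fin (d ^ 2) → (Fin d → ℂ)) : Prop :=
  ∀ j, ∃ k, ∃ c : ℂ, ‖c‖ = 1 ∧ U.mulVec (ψ j) = c • ψ k

/-- The SIC POVM `ψ` is covariant with respect to the set of operators `G`: every element of `G`
leaves it invariant, and `G` acts transitively on the vectors (up to phases). -/
def CovariantWith {d : ℕ} (G : Set (Matrix (Fin d) (Fin d) ℂ))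
    (ψ : Fin (d ^ 2) → (Fin d → ℂ)) : Prop :=
  (∀ U ∈ G, LeavesInvariant U ψ) ∧
    ∀ j k, ∃ U ∈ G, ∃ c : ℂ, ‖c‖ = 1 ∧ U.mulVec (ψ j) = c • ψ k

/-- The set of matrices underlying a subgroup of the unitary group. -/
def matSet {d : ℕ} (G : Subgroup (Matrix.unitaryGroup (Fin d) ℂ)) :
    Set (Matrix (Fin d) (Fin d) ℂ) :=
  (fun U : Matrix.unitaryGroup (Fin d) ℂ => (U : Matrix (Fin d) (Fin d) ℂ)) '' G

/-- The cyclic-shift unitary `X`, `X e_r = e_{r+1 (mod p)}`. -/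
def Xmat (p : ℕ) [NeZero p] : Matrix (Fin p) (Fin p) ℂ :=
  Matrix.of fun r s => if r = s + 1 then 1 else 0

/-- The diagonal unitary `Z`, `Z e_r = ω^r e_r` with `ω = exp(2πi/p)`. -/
def Zmat (p : ℕ) : Matrix (Fin p) (Fin p) ℂ :=
  Matrix.diagonal fun r => Complex.exp (2 * (Real.pi : ℂ) * Complex.I * ((r : ℕ) : ℂ) / (p : ℂ))

/-- The standard Heisenberg–Weyl group: the (sub)group of `U(p)` generated by `X` and `Z`,
regarded as a set of matrices.  (Since `X` and `Z` have finite order, the multiplicative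
closure coincides with the generated group.) -/
def HW (p : ℕ) [NeZero p] : Set (Matrix (Fin p) (Fin p) ℂ) :=
  (Submonoid.closure {Xmat p, Zmat p} : Submonoid (Matrix (Fin p) (Fin p) ℂ))

/-- Conjugation `W G W⁻¹` of a set of matrices by a unitary `W` (so `W⁻¹ = star W`). -/
def conjSet {d : ℕ} (W : Matrix (Fin d) (Fin d) ℂ)
    (G : Set (Matrix (Fin d) (Fin d) ℂ)) : Set (Matrix (Fin d) (Fin d) ℂ) :=
  (fun A => W * A * star W) '' G

/-- The one-parameter family of fiducial vectors `ψ_f(t) = (0, 1, −e^{it})/√2` in `ℂ³`. -/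
def ψf (t : ℝ) : Fin 3 → ℂ :=
  ![0, 1 / (Real.sqrt 2 : ℂ), -Complex.exp (Complex.I * (t : ℂ)) / (Real.sqrt 2 : ℂ)]

/-- The vector `Z^b X^a ψ_f(t)` of the Heisenberg–Weyl orbit of `ψ_f(t)`. -/
def sicVec (t : ℝ) (a b : Fin 3) : Fin 3 → ℂ :=
  ((Zmat 3) ^ (b : ℕ) * (Xmat 3) ^ (a : ℕ)).mulVec (ψf t)

/-- The rank-one projection `|φ⟩⟨φ|` onto the line of a unit vector `φ`. -/
def proj (φ : Fin 3 → ℂ) : Matrix (Fin 3) (Fin 3) ℂ :=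
  Matrix.vecMulVec φ fun i => (starRingEnd ℂ) (φ i)

/-- The Bargmann triple product `tr(ρ_ψ ρ_{Zψ} ρ_{Z²ψ})` for `ψ = ψ_f(t)`. -/
def triZ (t : ℝ) : ℂ :=
  Matrix.trace (proj (ψf t) * proj ((Zmat 3).mulVec (ψf t)) *
    proj (((Zmat 3) ^ 2).mulVec (ψf t)))

/-- The Bargmann triple product `tr(ρ_ψ ρ_{Xψ} ρ_{X²ψ})` for `ψ = ψ_f(t)`. -/
def triX (t : ℝ) : ℂ :=
  Matrix.trace (proj (ψf t) * proj ((Xmat 3).mulVec (ψf t)) *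
    proj (((Xmat 3) ^ 2).mulVec (ψf t)))

/-!
`Z` and `X` are unitaries of order three, so the three overlaps in the Bargmann product
`⟨ψ, Uψ⟩⟨Uψ, U²ψ⟩⟨U²ψ, ψ⟩` all equal `⟨ψ, Uψ⟩` and the triple product is its cube.
For `ψ = ψ_f(t)` these overlaps are `(ω + ω²)/2 = -1/2` and `-e^{-it}/2`; writing
`-e^{-3it} = e^{i(π - 3t)}` gives the phases.
-/

lemma permMatrix_pow {n R : Type*} [DecidableEq n] [Fintype n] [Semiring R]
    (σ : Equiv.Perm n) (k : ℕ) : (σ ^ k).permMatrix R = σ.permMatrix R ^ k := by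
  induction k with
  | zero => simp
  | succ k ih => rw [pow_succ, permMatrix_mul, ih, pow_succ']

lemma subRight_pow_apply {G : Type*} [AddCommGroup G] (a : G) (k : ℕ) (r : G) :
    (Equiv.subRight a ^ k) r = r - k • a := by
  induction k with
  | zero => simp
  | succ k ih => rw [pow_succ', Equiv.Perm.mul_apply, ih, Equiv.subRight_apply, succ_nsmul,
      sub_sub]

lemma inn_eq_star_dotProduct {d : ℕ} (x y : Fin d → ℂ) : inn x y = star x ⬝ᵥ y := rfl

lemma inn_mulVec_mulVec {d : ℕ} {U : Matrix (Fin d) (Fin d) ℂ}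
    (hU : U ∈ unitaryGroup (Fin d) ℂ) (x y : Fin d → ℂ) :
    inn (U *ᵥ x) (U *ᵥ y) = inn x y := by
  rw [inn_eq_star_dotProduct, inn_eq_star_dotProduct, star_mulVec, ← dotProduct_mulVec,
    mulVec_mulVec, ← star_eq_conjTranspose, mem_unitaryGroup_iff'.1 hU, one_mulVec]

lemma trace_proj_mul_proj_mul_proj (a b c : Fin 3 → ℂ) :
    trace (proj a * proj b * proj c) = inn a b * inn b c * inn c a := by
  simp only [trace, diag, mul_apply, proj, vecMulVec_apply, inn, Fin.sum_univ_three]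
  ring

lemma trace_proj_orbit_of_pow_eq_one {U : Matrix (Fin 3) (Fin 3) ℂ}
    (hU : U ∈ unitaryGroup (Fin 3) ℂ) (h3 : U ^ 3 = 1) (ψ : Fin 3 → ℂ) :
    trace (proj ψ * proj (U *ᵥ ψ) * proj ((U ^ 2) *ᵥ ψ)) = inn ψ (U *ᵥ ψ) ^ 3 := by
  have h2 : (U ^ 2) *ᵥ ψ = U *ᵥ (U *ᵥ ψ) := by rw [sq, mulVec_mulVec]
  have h12 : inn (U *ᵥ ψ) ((U ^ 2) *ᵥ ψ) = inn ψ (U *ᵥ ψ) := by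
    rw [h2, inn_mulVec_mulVec hU]
  have h20 : inn ((U ^ 2) *ᵥ ψ) ψ = inn ψ (U *ᵥ ψ) := by
    rw [← inn_mulVec_mulVec hU, mulVec_mulVec, ← pow_succ', h3, one_mulVec]
  rw [trace_proj_mul_proj_mul_proj, h12, h20]
  ring

lemma Zmat_eq_diagonal (p : ℕ) :
    Zmat p = diagonal fun r : Fin p => exp (2 * Real.pi * I / p) ^ (r : ℕ) := by
  ext1 r s
  simp only [Zmat, diagonal_apply, ← exp_nat_mul]
  congr 2
  ring

lemma Zmat_mem_unitaryGroup (p : ℕ) : Zmat p ∈ unitaryGroup (Fin p) ℂ := by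
  rw [mem_unitaryGroup_iff']
  rcases eq_or_ne p 0 with rfl | hp
  · exact Subsingleton.elim _ _
  have hω := (isPrimitiveRoot_exp p hp).norm'_eq_one hp
  rw [Zmat_eq_diagonal, star_eq_conjTranspose, diagonal_conjTranspose,
    diagonal_mul_diagonal, ← diagonal_one]
  congr 1
  ext r
  rw [Pi.star_apply, star_pow, ← mul_pow, RCLike.star_def, conj_mul', hω]
  simp

lemma Zmat_pow_self (p : ℕ) : Zmat p ^ p = 1 := by
  rcases eq_or_ne p 0 with rfl | hp
  · exact pow_zero _
  rw [Zmat_eq_diagonal, diagonal_pow, ← diagonal_one]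
  congr 1
  ext r
  rw [Pi.pow_apply, pow_right_comm, (isPrimitiveRoot_exp p hp).pow_eq_one, one_pow]

lemma Xmat_eq_permMatrix (p : ℕ) [NeZero p] :
    Xmat p = Equiv.Perm.permMatrix ℂ (Equiv.subRight (1 : Fin p)) := by
  ext1 r s
  simp [Xmat, PEquiv.toMatrix_apply, Equiv.toPEquiv_apply, eq_sub_iff_add_eq, eq_comm]

lemma Xmat_mem_unitaryGroup (p : ℕ) [NeZero p] : Xmat p ∈ unitaryGroup (Fin p) ℂ := by
  rw [mem_unitaryGroup_iff', Xmat_eq_permMatrix, star_eq_conjTranspose, conjTranspose_permMatrix,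
    ← permMatrix_mul, mul_inv_cancel, permMatrix_one]

open Fin.NatCast in
lemma Xmat_pow_self (p : ℕ) [NeZero p] : Xmat p ^ p = 1 := by
  have : Equiv.subRight (1 : Fin p) ^ p = 1 := Equiv.ext fun r => by
    rw [subRight_pow_apply, nsmul_one, Fin.natCast_self, sub_zero, Equiv.Perm.one_apply]
  rw [Xmat_eq_permMatrix, ← permMatrix_pow, this, permMatrix_one]

lemma norm_ψf_sq (t : ℝ) (r : Fin 3) : ‖ψf t r‖ ^ 2 = ![0, 1 / 2, 1 / 2] r := by
  fin_cases r <;> simp [ψf, norm_exp_I_mul_ofReal]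

lemma inn_ψf_Zmat_mulVec (t : ℝ) : inn (ψf t) (Zmat 3 *ᵥ ψf t) = -(1 / 2) := by
  have hω := (isPrimitiveRoot_exp 3 three_ne_zero).geom_sum_eq_zero (by norm_num)
  have h : inn (ψf t) (Zmat 3 *ᵥ ψf t) =
      ∑ r : Fin 3, exp (2 * Real.pi * I / 3) ^ (r : ℕ) * (‖ψf t r‖ ^ 2 : ℝ) := by
    simp only [inn, Zmat_eq_diagonal, mulVec_diagonal, ofReal_pow, ← conj_mul']
    refine Finset.sum_congr rfl fun r _ => ?_
    push_cast
    ring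
  simp only [Finset.sum_range_succ, Finset.sum_range_zero, Nat.cast_ofNat] at hω
  simp only [h, norm_ψf_sq, Fin.sum_univ_three, cons_val_zero, cons_val_one, cons_val_two,
    head_cons, tail_cons, Fin.val_zero, Fin.val_one, Fin.val_two]
  norm_num
  linear_combination hω / 2

lemma inn_ψf_Xmat_mulVec (t : ℝ) : inn (ψf t) (Xmat 3 *ᵥ ψf t) = -exp (-(I * t)) / 2 := by
  have h2 : ((Real.sqrt 2 : ℝ) : ℂ) ^ 2 = 2 := by
    rw [← ofReal_pow, Real.sq_sqrt zero_le_two, ofReal_ofNat]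
  simp only [inn, Xmat_eq_permMatrix, permMatrix_mulVec, Fin.sum_univ_three]
  simp only [ψf, one_div, Fin.isValue, cons_val_zero, map_zero, Function.comp_apply,
    Equiv.subRight_apply, zero_sub, cons_val, zero_mul, cons_val_one, map_inv₀, conj_ofReal,
    sub_self, mul_zero, add_zero, map_div₀, map_neg, ← exp_conj, map_mul, conj_I, neg_mul,
    Fin.reduceSub, zero_add]
  rw [← div_eq_mul_inv, div_div, ← sq, h2]

lemma arg_neg_exp_neg_mul_I {θ : ℝ} (h0 : 0 ≤ θ) (h1 : θ < 2 * Real.pi) :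
    arg (-exp (-(θ * I))) = Real.pi - θ := by
  have h : -exp (-(θ * I)) = exp ((Real.pi - θ : ℝ) * I) := by
    rw [ofReal_sub, sub_mul, sub_eq_add_neg, exp_add, exp_pi_mul_I, neg_one_mul]
  rw [h, arg_exp_mul_I, toIocMod_eq_self]
  constructor <;> linarith

/-- For `ψ = ψ_f(t)`: `tr(ρ_ψ ρ_{Zψ} ρ_{Z²ψ}) = −1/8` and
`tr(ρ_ψ ρ_{Xψ} ρ_{X²ψ}) = −e^{−3it}/8`; in particular the geometric phase of the first triple
is `π`, and for `t ∈ [0, π/3]` that of the second is `π − 3t`. -/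
theorem dim3_geometric_phases (t : ℝ) :
    triZ t = -(1 / 8) ∧
    triX t = -Complex.exp (-(3 : ℂ) * Complex.I * (t : ℂ)) / 8 ∧
    |(triZ t).arg| = Real.pi ∧
    (t ∈ Set.Icc (0 : ℝ) (Real.pi / 3) → |(triX t).arg| = Real.pi - 3 * t) := by
  have hZ : triZ t = -(1 / 8) := by
    rw [triZ, trace_proj_orbit_of_pow_eq_one (Zmat_mem_unitaryGroup 3) (Zmat_pow_self 3),
      inn_ψf_Zmat_mulVec]
    norm_num
  have hX : triX t = -exp (-((3 * t : ℝ) * I)) / 8 := by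
    rw [triX, trace_proj_orbit_of_pow_eq_one (Xmat_mem_unitaryGroup 3) (Xmat_pow_self 3),
      inn_ψf_Xmat_mulVec, div_pow, neg_pow, ← exp_nat_mul]
    push_cast
    ring_nf
  refine ⟨hZ, by rw [hX]; push_cast; ring_nf, ?_, fun ⟨h0, h1⟩ => ?_⟩
  · rw [hZ, arg_eq_pi_iff.2 (by norm_num), abs_of_pos Real.pi_pos]
  · rw [hX, div_eq_inv_mul, ← ofReal_ofNat, ← ofReal_inv, arg_real_mul _ (by norm_num),
      arg_neg_exp_neg_mul_I (by linarith) (by linarith [Real.pi_pos]), abs_of_nonneg (by linarith)]
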